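/- arXiv:1301.2976 — 4 statements merged into one kernel-verified Lean document; each statement's English description precedes it below -/
import Mathlib

section
/- The subtree rooted at address x = p 1 0^k (the set of addresses reachable from x by repeated application of CW and CCW, including x itself) equals the set { p s : s a binary string of length k+1, s ≠ 0^{k+1} }. In particular it has exactly 2^{k+1} − 1 elements. -/
/-- Number of trailing zero bits (2-adic valuation) of an address. -/
def tz (x : ℕ) : ℕ := padicValNat 2 x

/-- Clockwise descendant: `p 1 0^k ↦ p 1 1 0^(k-1)` (meaningful for `1 ≤ tz x`). -/
def CW (x : ℕ) : ℕ := x + 2 ^ (tz x - 1)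

/-- Counterclockwise descendant: `p 1 0^k ↦ p 0 1 0^(k-1)` (meaningful for `1 ≤ tz x`). -/
def CCW (x : ℕ) : ℕ := x - 2 ^ (tz x - 1)

/-- Parent map: `q c 1 0^m ↦ q 1 0^(m+1)`. -/
def UP (x : ℕ) : ℕ := x / 2 ^ (tz x + 2) * 2 ^ (tz x + 2) + 2 ^ (tz x + 1)

/-- One tree step from `a` to a child `b`. -/
def step (a b : ℕ) : Prop := 1 ≤ tz a ∧ (b = CW a ∨ b = CCW a)

/-- The subtree of `x`: addresses reachable by repeated `CW`/`CCW`, including `x`. -/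
def subtree (x : ℕ) : Set ℕ := {y | Relation.ReflTransGen step x y}

/-- `Pos a b = p 1 0^k` where `p` is the longest common binary prefix of `a` and `b`. -/
def Pos (a b : ℕ) : ℕ :=
  b / 2 ^ (Nat.log 2 (a ^^^ b) + 1) * 2 ^ (Nat.log 2 (a ^^^ b) + 1) + 2 ^ Nat.log 2 (a ^^^ b)

/-!
A node `x = p 1 0^(k+1)` has the two children `(p 1) 1 0^k` and `(p 0) 1 0^k`, while a node
ending in `1` is a leaf. Hence `subtree x = {x} ∪ subtree (p 1 1 0^k) ∪ subtree (p 0 1 0^k)`,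
and induction on `k`, for all prefixes at once, matches this with the splitting of the nonzero
words `s` of length `k + 2` by their first bit (`s = 1 0^(k+1)` being `x` itself).
-/

lemma tz_mul_two_pow_add_two_pow (p k : ℕ) : tz (p * 2 ^ (k + 1) + 2 ^ k) = k := by
  have hodd : ¬ 2 ∣ 2 * p + 1 := by omega
  rw [tz, show p * 2 ^ (k + 1) + 2 ^ k = 2 ^ k * (2 * p + 1) by ring,
    padicValNat.mul (by positivity) (by omega), padicValNat.prime_pow,
    padicValNat.eq_zero_of_not_dvd hodd, add_zero]

lemma CW_mul_two_pow_add_two_pow (p k : ℕ) :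
    CW (p * 2 ^ (k + 2) + 2 ^ (k + 1)) = (2 * p + 1) * 2 ^ (k + 1) + 2 ^ k := by
  rw [CW, tz_mul_two_pow_add_two_pow, Nat.add_sub_cancel]
  ring

lemma CCW_mul_two_pow_add_two_pow (p k : ℕ) :
    CCW (p * 2 ^ (k + 2) + 2 ^ (k + 1)) = 2 * p * 2 ^ (k + 1) + 2 ^ k := by
  rw [CCW, tz_mul_two_pow_add_two_pow, Nat.add_sub_cancel,
    show p * 2 ^ (k + 2) + 2 ^ (k + 1) = 2 * p * 2 ^ (k + 1) + 2 ^ k + 2 ^ k by ring,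
    Nat.add_sub_cancel]

lemma subtree_eq_singleton {x : ℕ} (hx : tz x = 0) : subtree x = {x} := by
  ext y
  change Relation.ReflTransGen step x y ↔ y = x
  rw [Relation.ReflTransGen.cases_head_iff]
  simp [step, hx, eq_comm]

lemma subtree_eq_insert {x : ℕ} (hx : 1 ≤ tz x) :
    subtree x = insert x (subtree (CW x) ∪ subtree (CCW x)) := by
  ext y
  change Relation.ReflTransGen step x y ↔
    y = x ∨ Relation.ReflTransGen step (CW x) y ∨ Relation.ReflTransGen step (CCW x) y
  rw [Relation.ReflTransGen.cases_head_iff]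
  simp only [step, hx, true_and, or_and_right, exists_or, exists_eq_left, eq_comm]

/-- `block p k` is the set of addresses `p s` with `s` a nonzero word of length `k + 1`. -/
def block (p k : ℕ) : Set ℕ := (p * 2 ^ (k + 1) + ·) '' Set.Ico 1 (2 ^ (k + 1))

lemma block_zero (p : ℕ) : block p 0 = {p * 2 + 1} := by
  ext y
  simp only [block, zero_add, pow_one, Set.mem_image, Set.mem_Ico, Set.mem_singleton_iff]
  constructor
  · rintro ⟨s, ⟨hs1, hs2⟩, rfl⟩
    obtain rfl : s = 1 := by omega
    rfl
  · rintro rfl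
    exact ⟨1, ⟨le_rfl, one_lt_two⟩, rfl⟩

lemma block_succ (p k : ℕ) : block p (k + 1) =
    insert (p * 2 ^ (k + 2) + 2 ^ (k + 1)) (block (2 * p + 1) k ∪ block (2 * p) k) := by
  ext y
  simp only [block, Set.mem_image, Set.mem_Ico, Set.mem_insert_iff, Set.mem_union]
  rw [show p * 2 ^ (k + 2) = 2 * (p * 2 ^ (k + 1)) by ring,
    show (2 * p + 1) * 2 ^ (k + 1) = 2 * (p * 2 ^ (k + 1)) + 2 ^ (k + 1) by ring,
    show 2 * p * 2 ^ (k + 1) = 2 * (p * 2 ^ (k + 1)) by ring,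
    show 2 ^ (k + 2) = 2 * 2 ^ (k + 1) by ring]
  generalize p * 2 ^ (k + 1) = q
  have hN : 1 ≤ 2 ^ (k + 1) := Nat.one_le_two_pow
  generalize 2 ^ (k + 1) = N at hN ⊢
  constructor
  · rintro ⟨s, ⟨hs1, hs2⟩, rfl⟩
    rcases lt_trichotomy s N with h | rfl | h
    · exact Or.inr (Or.inr ⟨s, ⟨hs1, h⟩, rfl⟩)
    · exact Or.inl rfl
    · exact Or.inr (Or.inl ⟨s - N, ⟨by omega, by omega⟩, by omega⟩)
  · rintro (rfl | ⟨s, ⟨hs1, hs2⟩, rfl⟩ | ⟨s, ⟨hs1, hs2⟩, rfl⟩)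
    · exact ⟨N, ⟨hN, by omega⟩, rfl⟩
    · exact ⟨N + s, ⟨by omega, by omega⟩, by omega⟩
    · exact ⟨s, ⟨hs1, by omega⟩, rfl⟩

theorem subtree_mul_two_pow_add_two_pow (p k : ℕ) :
    subtree (p * 2 ^ (k + 1) + 2 ^ k) = block p k := by
  induction k generalizing p with
  | zero => simpa [block_zero] using subtree_eq_singleton (tz_mul_two_pow_add_two_pow p 0)
  | succ k ih =>
    rw [subtree_eq_insert (by rw [tz_mul_two_pow_add_two_pow]; omega),
      CW_mul_two_pow_add_two_pow, CCW_mul_two_pow_add_two_pow, ih, ih, block_succ]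

lemma ncard_block (p k : ℕ) : (block p k).ncard = 2 ^ (k + 1) - 1 := by
  rw [block, Set.ncard_image_of_injective _ (add_right_injective _), ← Finset.coe_Ico,
    Set.ncard_coe_finset, Nat.card_Ico]

theorem stmt3_general (p k x : ℕ) (hxdef : x = p * 2 ^ (k + 1) + 2 ^ k) :
    subtree x = {y | ∃ s, 1 ≤ s ∧ s < 2 ^ (k + 1) ∧ y = p * 2 ^ (k + 1) + s} ∧
    (subtree x).ncard = 2 ^ (k + 1) - 1 := by
  subst hxdef
  rw [subtree_mul_two_pow_add_two_pow, ncard_block]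
  refine ⟨Set.ext fun y => ⟨?_, ?_⟩, rfl⟩
  · rintro ⟨s, ⟨hs1, hs2⟩, rfl⟩
    exact ⟨s, hs1, hs2, rfl⟩
  · rintro ⟨s, hs1, hs2, rfl⟩
    exact ⟨s, ⟨hs1, hs2⟩, rfl⟩

/-- the subtree of `x = p 1 0^k` is exactly
`{ p s : s ∈ {0,1}^(k+1), s ≠ 0^(k+1) }`, of cardinality `2^(k+1) - 1`. -/
theorem stmt3 (d p k x : ℕ) (hxdef : x = p * 2 ^ (k + 1) + 2 ^ k) (hx : x < 2 ^ d) :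
    subtree x = {y | ∃ s, 1 ≤ s ∧ s < 2 ^ (k + 1) ∧ y = p * 2 ^ (k + 1) + s} ∧
    (subtree x).ncard = 2 ^ (k + 1) - 1 :=
  stmt3_general p k x hxdef
end

section
/- For every address x = p 1 0^k with k ≥ 1, the subtree rooted at CW[x] and the subtree rooted at CCW[x] are disjoint, each has exactly 2^k − 1 elements, and together with {x} they partition the subtree rooted at x. -/
lemma tz_eq (m q : ℕ) : tz (q * 2 ^ (m+1) + 2 ^ m) = m := by
  unfold tz
  have h : q * 2 ^ (m+1) + 2 ^ m = 2 ^ m * (2*q+1) := by ring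
  rw [h, padicValNat.mul (by positivity) (by omega),
      padicValNat.prime_pow, padicValNat.eq_zero_of_not_dvd (by omega)]
  omega

lemma subtree_step {x y : ℕ} (h : y ∈ subtree x) :
    x = y ∨ y ∈ subtree (CW x) ∪ subtree (CCW x) := by
  rcases Relation.ReflTransGen.cases_head h with h1 | ⟨z, hz, hzy⟩
  · exact Or.inl h1
  · right
    rcases hz.2 with rfl | rfl
    · exact Or.inl hzy
    · exact Or.inr hzy

lemma subtree_eq {x : ℕ} (h : 1 ≤ tz x) :
    subtree x = insert x (subtree (CW x) ∪ subtree (CCW x)) := by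
  ext y
  constructor
  · intro hy
    rcases subtree_step hy with rfl | h1
    · exact Set.mem_insert _ _
    · exact Set.mem_insert_of_mem _ h1
  · intro hy
    rcases hy with rfl | hy | hy
    · exact Relation.ReflTransGen.refl
    · exact Relation.ReflTransGen.head ⟨h, Or.inl rfl⟩ hy
    · exact Relation.ReflTransGen.head ⟨h, Or.inr rfl⟩ hy

lemma subtree_Ioo : ∀ m q : ℕ, subtree (q * 2 ^ (m+1) + 2 ^ m) =
    Set.Ioo (q * 2 ^ (m+1)) (q * 2 ^ (m+1) + 2 ^ (m+1)) := by
  intro m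
  induction m with
  | zero =>
    intro q
    have htz := tz_eq 0 q
    have e0 : (2:ℕ) ^ 0 = 1 := by norm_num
    have e1 : (2:ℕ) ^ (0+1) = 2 := by norm_num
    ext y
    simp only [Set.mem_Ioo]
    constructor
    · intro hy
      rcases Relation.ReflTransGen.cases_head hy with h1 | ⟨z, hz, _⟩
      · omega
      · exact absurd (htz ▸ hz.1) (by omega)
    · intro hy
      have hyx : y = q * 2 ^ (0+1) + 2 ^ 0 := by omega
      exact hyx ▸ Relation.ReflTransGen.refl
  | succ m IH =>
    intro q
    have htz : tz (q * 2 ^ (m+1+1) + 2 ^ (m+1)) = m + 1 := tz_eq (m+1) q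
    have hcw : CW (q * 2 ^ (m+1+1) + 2 ^ (m+1)) = (2*q+1) * 2 ^ (m+1) + 2 ^ m := by
      unfold CW; rw [htz]; simp only [Nat.add_sub_cancel]; ring
    have hccw : CCW (q * 2 ^ (m+1+1) + 2 ^ (m+1)) = (2*q) * 2 ^ (m+1) + 2 ^ m := by
      unfold CCW; rw [htz]; simp only [Nat.add_sub_cancel]
      have h1 : q * 2 ^ (m+1+1) = (2*q) * 2 ^ (m+1) := by ring
      have h2 : (2:ℕ) ^ (m+1) = 2 * 2 ^ m := by ring
      omega
    rw [subtree_eq (by rw [htz]; omega), hcw, hccw, IH, IH]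
    have e1 : q * 2 ^ (m+1+1) = 2 * (q * 2 ^ (m+1)) := by ring
    have e2 : (2*q+1) * 2 ^ (m+1) = 2 * (q * 2 ^ (m+1)) + 2 ^ (m+1) := by ring
    have e3 : (2*q) * 2 ^ (m+1) = 2 * (q * 2 ^ (m+1)) := by ring
    have e4 : (2:ℕ) ^ (m+1+1) = 2 * 2 ^ (m+1) := by ring
    have e5 : (0:ℕ) < 2 ^ (m+1) := by positivity
    ext y
    simp only [Set.mem_insert_iff, Set.mem_union, Set.mem_Ioo]
    omega

lemma ncard_Ioo (a b : ℕ) : (Set.Ioo a b).ncard = b - a - 1 := by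
  rw [← Finset.coe_Ioo, Set.ncard_coe_finset, Nat.card_Ioo]

/-- for `x = p 1 0^k` with `k ≥ 1`, the subtrees of `CW[x]` and `CCW[x]`
are disjoint, each of cardinality `2^k - 1`, and together with `{x}` they partition
the subtree of `x`. -/
theorem stmt4 (d p k x : ℕ) (hk : 1 ≤ k) (hxdef : x = p * 2 ^ (k + 1) + 2 ^ k)
    (hx : x < 2 ^ d) :
    Disjoint (subtree (CW x)) (subtree (CCW x)) ∧
    (subtree (CW x)).ncard = 2 ^ k - 1 ∧
    (subtree (CCW x)).ncard = 2 ^ k - 1 ∧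
    x ∉ subtree (CW x) ∪ subtree (CCW x) ∧
    subtree x = insert x (subtree (CW x) ∪ subtree (CCW x)) := by
  obtain ⟨n, rfl⟩ : ∃ n, k = n + 1 := ⟨k - 1, by omega⟩
  subst hxdef
  have htz : tz (p * 2 ^ (n+1+1) + 2 ^ (n+1)) = n + 1 := tz_eq (n+1) p
  have hcw : CW (p * 2 ^ (n+1+1) + 2 ^ (n+1)) = (2*p+1) * 2 ^ (n+1) + 2 ^ n := by
    unfold CW; rw [htz]; simp only [Nat.add_sub_cancel]; ring
  have hccw : CCW (p * 2 ^ (n+1+1) + 2 ^ (n+1)) = (2*p) * 2 ^ (n+1) + 2 ^ n := by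
    unfold CCW; rw [htz]; simp only [Nat.add_sub_cancel]
    have h1 : p * 2 ^ (n+1+1) = (2*p) * 2 ^ (n+1) := by ring
    have h2 : (2:ℕ) ^ (n+1) = 2 * 2 ^ n := by ring
    omega
  have hscw : subtree (CW (p * 2 ^ (n+1+1) + 2 ^ (n+1))) =
      Set.Ioo ((2*p+1) * 2 ^ (n+1)) ((2*p+1) * 2 ^ (n+1) + 2 ^ (n+1)) := by
    rw [hcw]; exact subtree_Ioo n (2*p+1)
  have hsccw : subtree (CCW (p * 2 ^ (n+1+1) + 2 ^ (n+1))) =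
      Set.Ioo ((2*p) * 2 ^ (n+1)) ((2*p) * 2 ^ (n+1) + 2 ^ (n+1)) := by
    rw [hccw]; exact subtree_Ioo n (2*p)
  have e1 : p * 2 ^ (n+1+1) = 2 * (p * 2 ^ (n+1)) := by ring
  have e2 : (2*p+1) * 2 ^ (n+1) = 2 * (p * 2 ^ (n+1)) + 2 ^ (n+1) := by ring
  have e3 : (2*p) * 2 ^ (n+1) = 2 * (p * 2 ^ (n+1)) := by ring
  have e5 : (0:ℕ) < 2 ^ (n+1) := by positivity
  refine ⟨?_, ?_, ?_, ?_, ?_⟩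
  · rw [hscw, hsccw, Set.disjoint_left]
    intro a ha hb
    simp only [Set.mem_Ioo] at ha hb
    omega
  · rw [hscw, ncard_Ioo]; omega
  · rw [hsccw, ncard_Ioo]; omega
  · rw [hscw, hsccw]
    simp only [Set.mem_union, Set.mem_Ioo]
    omega
  · exact subtree_eq (by rw [htz]; omega)
end

section
/- For natural numbers a < b, the set of integers in the half-open interval (a, b] contains a unique element of maximal 2-adic valuation (number of trailing zero bits), and this element equals p 1 0^k where, writing a and b as d-bit binary strings, p is their longest common prefix, a = p 0 X, b = p 1 Y, and k = d − |p| − 1. -/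
theorem div_two_pow_eq_of_xor_lt {a b n : ℕ} (h : a ^^^ b < 2 ^ n) : a / 2 ^ n = b / 2 ^ n := by
  have hxor : a >>> n ^^^ b >>> n = 0 := by
    rw [← Nat.shiftRight_xor_distrib]
    exact Nat.shiftRight_eq_zero _ _ h
  simpa only [Nat.shiftRight_eq_div_pow] using xor_eq_zero_iff.mp hxor

/-- The prefix decomposition `a = p 0 X`, `b = p 1 Y`, with `p = b / 2^(L+1)`. -/
theorem div_two_pow_log_xor {a b : ℕ} (hab : a < b) :
    a / 2 ^ Nat.log 2 (a ^^^ b) = 2 * (b / 2 ^ (Nat.log 2 (a ^^^ b) + 1)) ∧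
    b / 2 ^ Nat.log 2 (a ^^^ b) = 2 * (b / 2 ^ (Nat.log 2 (a ^^^ b) + 1)) + 1 := by
  set L := Nat.log 2 (a ^^^ b)
  have hne : a ^^^ b ≠ 0 := fun h => hab.ne (xor_eq_zero_iff.mp h)
  have hprefix : a / 2 ^ (L + 1) = b / 2 ^ (L + 1) :=
    div_two_pow_eq_of_xor_lt (Nat.lt_pow_succ_log_self one_lt_two _)
  have hbit : a / 2 ^ L % 2 ≠ b / 2 ^ L % 2 := by
    have h := Nat.testBit_log2 hne
    rw [Nat.log2_eq_log_two, Nat.testBit_xor, Nat.testBit_eq_decide_div_mod_eq,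
      Nat.testBit_eq_decide_div_mod_eq] at h
    change (decide (a / 2 ^ L % 2 = 1) ^^ decide (b / 2 ^ L % 2 = 1)) = true at h
    simp only [bne_iff_ne, ne_eq, decide_eq_decide] at h
    omega
  have hle : a / 2 ^ L ≤ b / 2 ^ L := Nat.div_le_div_right hab.le
  have hsplit : ∀ x, x / 2 ^ L = 2 * (x / 2 ^ (L + 1)) + x / 2 ^ L % 2 := fun x => by
    rw [pow_succ, ← Nat.div_div_eq_div_mul]
    omega
  have ha := hsplit a
  have hb := hsplit b
  omega

theorem pos_eq_succ_div_mul {a b : ℕ} (hab : a < b) :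
    Pos a b = (a / 2 ^ Nat.log 2 (a ^^^ b) + 1) * 2 ^ Nat.log 2 (a ^^^ b) := by
  rw [Pos, (div_two_pow_log_xor hab).1, pow_succ]
  ring

theorem tz_two_pow_mul_odd (L : ℕ) {k : ℕ} (hk : Odd k) : tz (2 ^ L * k) = L := by
  have : Fact (Nat.Prime 2) := ⟨Nat.prime_two⟩
  rw [tz, padicValNat.mul (by positivity) (by rintro rfl; simp at hk), padicValNat.prime_pow,
    padicValNat.eq_zero_of_not_dvd (by simpa [← even_iff_two_dvd] using hk), add_zero]

theorem tz_pos {a b : ℕ} (hab : a < b) : tz (Pos a b) = Nat.log 2 (a ^^^ b) := by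
  obtain ⟨ha, -⟩ := div_two_pow_log_xor hab
  rw [pos_eq_succ_div_mul hab, mul_comm, ha]
  exact tz_two_pow_mul_odd _ (odd_two_mul_add_one _)

theorem two_pow_dvd_of_le_tz {L y : ℕ} (h : L ≤ tz y) : 2 ^ L ∣ y :=
  (pow_dvd_pow 2 h).trans pow_padicValNat_dvd

section

variable {n a b : ℕ} (h : b / n = a / n + 1)
include h

theorem succ_div_mul_mem_Ioc : (a / n + 1) * n ∈ Set.Ioc a b := by
  have hn : 0 < n := Nat.pos_of_ne_zero (by rintro rfl; simp at h)
  refine ⟨?_, h ▸ Nat.div_mul_le_self b n⟩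
  rw [add_mul, one_mul]
  exact Nat.lt_div_mul_add hn

theorem eq_succ_div_mul_of_dvd {y : ℕ} (hy : y ∈ Set.Ioc a b) (hdvd : n ∣ y) :
    y = (a / n + 1) * n := by
  have hn : 0 < n := Nat.pos_of_ne_zero (by rintro rfl; simp at h)
  obtain ⟨c, rfl⟩ := hdvd
  have hlo : a / n < c := (Nat.div_lt_iff_lt_mul hn).mpr (by rw [mul_comm]; exact hy.1)
  have hhi : c ≤ b / n := (Nat.le_div_iff_mul_le hn).mpr (by rw [mul_comm]; exact hy.2)
  rw [mul_comm, show c = a / n + 1 by omega]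

end

theorem stmt6_general (a b : ℕ) (hab : a < b) :
    Pos a b ∈ Set.Ioc a b ∧
    (∀ y ∈ Set.Ioc a b, tz y ≤ tz (Pos a b)) ∧
    (∀ y ∈ Set.Ioc a b, (∀ z ∈ Set.Ioc a b, tz z ≤ tz y) → y = Pos a b) := by
  have hdiv : b / 2 ^ Nat.log 2 (a ^^^ b) = a / 2 ^ Nat.log 2 (a ^^^ b) + 1 := by
    obtain ⟨ha, hb⟩ := div_two_pow_log_xor hab
    omega
  have hmem : Pos a b ∈ Set.Ioc a b := pos_eq_succ_div_mul hab ▸ succ_div_mul_mem_Ioc hdiv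
  have hunique : ∀ y ∈ Set.Ioc a b, tz (Pos a b) ≤ tz y → y = Pos a b := fun y hy hle =>
    pos_eq_succ_div_mul hab ▸
      eq_succ_div_mul_of_dvd hdiv hy (two_pow_dvd_of_le_tz (tz_pos hab ▸ hle))
  refine ⟨hmem, fun y hy => ?_, fun y hy hmax => hunique y hy (hmax _ hmem)⟩
  by_contra! hlt
  exact hlt.ne' (congrArg tz (hunique y hy hlt.le))

/-- for `a < b < 2^d`, the interval `(a, b]` contains a unique element of
maximal number of trailing zero bits, and it equals `Pos a b = p 1 0^k` where `p` is the
longest common prefix of `a` and `b`. -/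
theorem stmt6 (d a b : ℕ) (hab : a < b) (hb : b < 2 ^ d) :
    Pos a b ∈ Set.Ioc a b ∧
    (∀ y ∈ Set.Ioc a b, tz y ≤ tz (Pos a b)) ∧
    (∀ y ∈ Set.Ioc a b, (∀ z ∈ Set.Ioc a b, tz z ≤ tz y) → y = Pos a b) :=
  stmt6_general a b hab
end

section
/- Let the address space [0, 2^d) be partitioned into half-open segments assigned to peers, and let each peer's position be Pos of its segment. Then the set of positions occupied by peers whose positions lie in the subtree rooted at any fixed address x = p 1 0^k corresponds to a contiguous (cyclically contiguous) block of segments: the union of the address space segments of these peers is an interval of the address space. -/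
/-- Position of peer `i`: the peer whose segment contains the all-zero address (peer 0)
takes the root position 0; peer `i ≥ 1` with segment `(a (i-1), a i]` takes `Pos` of it. -/
def pos (a : ℕ → ℕ) (i : ℕ) : ℕ := if i = 0 then 0 else Pos (a (i - 1)) (a i)
/-- Address space segment of peer `i`: peer 0 owns the wrap-around segment containing
the all-zero address; peer `i ≥ 1` owns `(a (i-1), a i]`. -/
def seg (d N : ℕ) (a : ℕ → ℕ) (i : ℕ) : Set ℕ :=
  if i = 0 then Set.Iic (a 0) ∪ Set.Ioo (a N) (2 ^ d) else Set.Ioc (a (i - 1)) (a i)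

/-!
The subtree of `x = p 1 0^k` is exactly the open dyadic block `(p 2^(k+1), (p+1) 2^(k+1))`:
`CW` and `CCW` move to the midpoints of the two halves of the current block. For `c < b`,
`Pos c b` is the midpoint of the smallest dyadic block having `c` in its left half and `b` in its
right half; as dyadic blocks are nested or disjoint, `Pos c b` lies in the open block of `x` iff
`p 2^(k+1) ≤ c` and `b < (p+1) 2^(k+1)`. The root position `0` lies in no open block, so by
monotonicity of the boundaries the peers in the subtree form a run `s, …, t`, whose segments tile
`(a (s-1), a t]`.
-/

-- The paper's address `p 1 0^k`, the midpoint of the dyadic block `[p 2^(k+1), (p+1) 2^(k+1)]`.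
def dyadicMid (p k : ℕ) : ℕ := p * 2 ^ (k + 1) + 2 ^ k

lemma tz_dyadicMid (p k : ℕ) : tz (dyadicMid p k) = k := by
  have h : dyadicMid p k = 2 ^ k * (2 * p + 1) := by rw [dyadicMid]; ring
  rw [tz, h, padicValNat.mul (by positivity) (by omega), padicValNat.prime_pow,
    padicValNat.eq_zero_of_not_dvd (by omega), add_zero]

lemma CW_dyadicMid (p k : ℕ) : CW (dyadicMid p (k + 1)) = dyadicMid (2 * p + 1) k := by
  rw [CW, tz_dyadicMid, dyadicMid, dyadicMid, Nat.add_sub_cancel]; ring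

lemma CCW_dyadicMid (p k : ℕ) : CCW (dyadicMid p (k + 1)) = dyadicMid (2 * p) k := by
  rw [CCW, tz_dyadicMid, dyadicMid, dyadicMid, Nat.add_sub_cancel, pow_succ, pow_succ,
    show p * (2 ^ k * 2 * 2) + 2 ^ k * 2 = 2 * p * (2 ^ k * 2) + 2 ^ k + 2 ^ k by ring,
    Nat.add_sub_cancel]

lemma step_dyadicMid_iff {p k y : ℕ} :
    step (dyadicMid p k) y ↔
      ∃ j, k = j + 1 ∧ (y = dyadicMid (2 * p + 1) j ∨ y = dyadicMid (2 * p) j) := by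
  rw [step, tz_dyadicMid]
  constructor
  · rintro ⟨hk, hy⟩
    obtain ⟨j, rfl⟩ := Nat.exists_eq_add_of_le' hk
    exact ⟨j, rfl, by rwa [CW_dyadicMid, CCW_dyadicMid] at hy⟩
  · rintro ⟨j, rfl, hy⟩
    exact ⟨by omega, by rwa [CW_dyadicMid, CCW_dyadicMid]⟩

lemma dyadicMid_mem_Ioo (p k : ℕ) :
    dyadicMid p k ∈ Set.Ioo (p * 2 ^ (k + 1)) ((p + 1) * 2 ^ (k + 1)) := by
  rw [dyadicMid, pow_succ]; constructor <;> nlinarith [Nat.one_le_two_pow (n := k)]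

lemma Ioo_dyadic_child_subset {p q j : ℕ} (hq : q = 2 * p ∨ q = 2 * p + 1) :
    Set.Ioo (q * 2 ^ (j + 1)) ((q + 1) * 2 ^ (j + 1)) ⊆
      Set.Ioo (p * 2 ^ (j + 1 + 1)) ((p + 1) * 2 ^ (j + 1 + 1)) := by
  apply Set.Ioo_subset_Ioo <;> rw [pow_succ _ (j + 1)] <;> rcases hq with rfl | rfl <;>
    nlinarith [Nat.one_le_two_pow (n := j + 1)]

lemma subtree_dyadicMid_subset (p k : ℕ) :
    subtree (dyadicMid p k) ⊆ Set.Ioo (p * 2 ^ (k + 1)) ((p + 1) * 2 ^ (k + 1)) := by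
  suffices ∀ x y, Relation.ReflTransGen step x y → ∀ p k, x = dyadicMid p k →
      y ∈ Set.Ioo (p * 2 ^ (k + 1)) ((p + 1) * 2 ^ (k + 1)) from
    fun y hy => this _ y hy p k rfl
  intro x y h
  induction h using Relation.ReflTransGen.head_induction_on with
  | refl => rintro p k rfl; exact dyadicMid_mem_Ioo p k
  | head hstep _ ih =>
    rintro p k rfl
    obtain ⟨j, rfl, hchild | hchild⟩ := step_dyadicMid_iff.mp hstep
    · exact Ioo_dyadic_child_subset (Or.inr rfl) (ih _ _ hchild)
    · exact Ioo_dyadic_child_subset (Or.inl rfl) (ih _ _ hchild)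

lemma Ioo_subset_subtree_dyadicMid (p k : ℕ) :
    Set.Ioo (p * 2 ^ (k + 1)) ((p + 1) * 2 ^ (k + 1)) ⊆ subtree (dyadicMid p k) := by
  induction k generalizing p with
  | zero =>
    rintro y ⟨hlo, hhi⟩
    rw [show y = dyadicMid p 0 by
      rw [dyadicMid]; simp only [zero_add, pow_one, pow_zero] at hlo hhi ⊢; omega]
    exact .refl
  | succ k ih =>
    rintro y ⟨hlo, hhi⟩
    rw [pow_succ _ (k + 1)] at hlo hhi
    rcases lt_trichotomy y (dyadicMid p (k + 1)) with hlt | rfl | hgt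
    · refine .head (step_dyadicMid_iff.mpr ⟨k, rfl, .inr rfl⟩) (ih (2 * p) ⟨?_, ?_⟩) <;>
        rw [dyadicMid, pow_succ _ (k + 1)] at hlt <;> linarith
    · exact .refl
    · refine .head (step_dyadicMid_iff.mpr ⟨k, rfl, .inl rfl⟩) (ih (2 * p + 1) ⟨?_, ?_⟩) <;>
        rw [dyadicMid, pow_succ _ (k + 1)] at hgt <;> linarith

lemma subtree_dyadicMid (p k : ℕ) :
    subtree (dyadicMid p k) = Set.Ioo (p * 2 ^ (k + 1)) ((p + 1) * 2 ^ (k + 1)) :=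
  (subtree_dyadicMid_subset p k).antisymm (Ioo_subset_subtree_dyadicMid p k)

lemma div_two_pow_eq_iff_xor_lt {c b : ℕ} (n : ℕ) : c / 2 ^ n = b / 2 ^ n ↔ c ^^^ b < 2 ^ n := by
  rw [← Nat.shiftRight_eq_div_pow, ← Nat.shiftRight_eq_div_pow, ← xor_eq_zero_iff,
    ← Nat.shiftRight_xor_distrib, Nat.shiftRight_eq_div_pow, Nat.div_eq_zero_iff_lt (by positivity)]

lemma div_two_pow_eq_of_le {c b m n : ℕ} (h : c / 2 ^ m = b / 2 ^ m) (hmn : m ≤ n) :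
    c / 2 ^ n = b / 2 ^ n :=
  (div_two_pow_eq_iff_xor_lt n).2 <|
    ((div_two_pow_eq_iff_xor_lt m).1 h).trans_le (Nat.pow_le_pow_right two_pos hmn)

lemma exists_Pos_spec {c b : ℕ} (h : c < b) :
    ∃ L, c / 2 ^ (L + 1) = b / 2 ^ (L + 1) ∧ 2 ^ L ∣ Pos c b ∧ c < Pos c b ∧ Pos c b ≤ b := by
  set L := Nat.log 2 (c ^^^ b) with hL
  have hne : c ^^^ b ≠ 0 := by rw [Ne, xor_eq_zero_iff]; omega
  have hhigh : c / 2 ^ (L + 1) = b / 2 ^ (L + 1) :=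
    (div_two_pow_eq_iff_xor_lt _).2 (Nat.lt_pow_succ_log_self one_lt_two _)
  have hsplit : c / 2 ^ L ≠ b / 2 ^ L := fun h =>
    (Nat.pow_log_le_self 2 hne).not_gt ((div_two_pow_eq_iff_xor_lt _).1 h)
  have hhalf : c / 2 ^ L / 2 = b / 2 ^ L / 2 := by
    simpa only [Nat.div_div_eq_div_mul, ← pow_succ] using hhigh
  have hle : c / 2 ^ L ≤ b / 2 ^ L := Nat.div_le_div_right h.le
  -- `b / 2^L` is the odd successor of the even `c / 2^L`, and `Pos c b` is `b / 2^L * 2^L`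
  have hPos : Pos c b = b / 2 ^ L * 2 ^ L := by
    rw [Pos, ← hL, pow_succ, ← Nat.div_div_eq_div_mul]
    obtain ⟨w, hw⟩ : ∃ w, b / 2 ^ L = 2 * w + 1 := ⟨b / 2 ^ L / 2, by omega⟩
    rw [hw, show (2 * w + 1) / 2 = w by omega]
    ring
  refine ⟨L, hhigh, hPos ▸ Dvd.intro_left _ rfl, ?_, hPos ▸ Nat.div_mul_le_self b _⟩
  calc c < c / 2 ^ L * 2 ^ L + 2 ^ L := Nat.lt_div_mul_add (by positivity)
    _ = (c / 2 ^ L + 1) * 2 ^ L := by ring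
    _ ≤ Pos c b := by rw [hPos]; gcongr; omega

lemma Pos_mem_Ioo_iff {c b : ℕ} (h : c < b) (p n : ℕ) :
    Pos c b ∈ Set.Ioo (p * 2 ^ n) ((p + 1) * 2 ^ n) ↔ p * 2 ^ n ≤ c ∧ b < (p + 1) * 2 ^ n := by
  obtain ⟨L, hhigh, hdvd, hcP, hPb⟩ := exists_Pos_spec h
  refine ⟨fun ⟨hlo, hhi⟩ => ?_, fun ⟨hlo, hhi⟩ => ⟨hlo.trans_lt hcP, hPb.trans_lt hhi⟩⟩
  have hLn : L < n := by
    by_contra! hnL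
    obtain ⟨m, hm⟩ := (Nat.pow_dvd_pow 2 hnL).trans hdvd
    rw [hm] at hlo hhi
    have : p < m := Nat.lt_of_mul_lt_mul_left (a := 2 ^ n) (by linarith)
    have : m < p + 1 := Nat.lt_of_mul_lt_mul_left (a := 2 ^ n) (by linarith)
    omega
  have hcb : c / 2 ^ n = b / 2 ^ n := div_two_pow_eq_of_le hhigh hLn
  have hP : Pos c b / 2 ^ n = p := Nat.div_eq_of_lt_le hlo.le hhi
  have hc : c / 2 ^ n = p :=
    le_antisymm (hP ▸ Nat.div_le_div_right hcP.le) (hcb ▸ hP ▸ Nat.div_le_div_right hPb)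
  have hb : b / 2 ^ n = p := hcb ▸ hc
  rw [Nat.div_eq_iff (by positivity)] at hc hb
  have := Nat.one_le_two_pow (n := n)
  exact ⟨hc.1, by rw [add_mul]; omega⟩

lemma biUnion_Icc_Ioc_pred {a : ℕ → ℕ} {s t : ℕ} (hmono : MonotoneOn a (Set.Iic t))
    (hst : s ≤ t) : ⋃ i ∈ Set.Icc s t, Set.Ioc (a (i - 1)) (a i) = Set.Ioc (a (s - 1)) (a t) := by
  induction t, hst using Nat.le_induction with
  | base => simp
  | succ t hst ih =>
    have hmono' : MonotoneOn a (Set.Iic t) := hmono.mono (Set.Iic_subset_Iic.2 t.le_succ)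
    rw [show Set.Icc s (t + 1) = insert (t + 1) (Set.Icc s t) by
      ext; simp only [Set.mem_insert_iff, Set.mem_Icc]; omega,
      Set.biUnion_insert, ih hmono', Nat.add_sub_cancel, Set.union_comm,
      Set.Ioc_union_Ioc_eq_Ioc]
    · exact hmono (Set.mem_Iic.2 (by omega)) (Set.mem_Iic.2 (by omega)) (by omega)
    · exact hmono (Set.mem_Iic.2 (by omega)) (Set.mem_Iic.2 le_rfl) t.le_succ

lemma exists_biUnion_Ioc_pred_eq_Ioc {a : ℕ → ℕ} {N : ℕ} (hmono : MonotoneOn a (Set.Iic N))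
    {I : Set ℕ} (hI : I.OrdConnected) (hIN : I ⊆ Set.Iic N) :
    ∃ l h, ⋃ i ∈ I, Set.Ioc (a (i - 1)) (a i) = Set.Ioc l h := by
  rcases I.eq_empty_or_nonempty with rfl | hne
  · exact ⟨0, 0, by simp⟩
  have hbdd : BddAbove I := ⟨N, hIN⟩
  rw [(hne.ordConnected_iff_of_bdd (OrderBot.bddBelow I) hbdd).1 hI]
  exact ⟨_, _, biUnion_Icc_Ioc_pred (hmono.mono (Set.Iic_subset_Iic.2 (csSup_le hne hIN)))
    (csInf_le_csSup hne (OrderBot.bddBelow I) hbdd)⟩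

lemma ordConnected_setOf_le_pred_lt {a : ℕ → ℕ} {N : ℕ} (hmono : MonotoneOn a (Set.Iic N))
    (lo hi : ℕ) : Set.OrdConnected {i | 1 ≤ i ∧ i ≤ N ∧ lo ≤ a (i - 1) ∧ a i < hi} := by
  refine ⟨fun i ⟨hi1, _, hlo, _⟩ j ⟨_, hjN, _, hhi⟩ m ⟨him, hmj⟩ => ⟨by omega, by omega, ?_, ?_⟩⟩
  · exact hlo.trans (hmono (Set.mem_Iic.2 (by omega)) (Set.mem_Iic.2 (by omega)) (by omega))
  · exact (hmono (Set.mem_Iic.2 (by omega)) (Set.mem_Iic.2 (by omega)) hmj).trans_lt hhi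

lemma pos_mem_subtree_dyadicMid_iff {a : ℕ → ℕ} {N i : ℕ} (hmono : StrictMonoOn a (Set.Iic N))
    (hi : i ≤ N) (p k : ℕ) :
    pos a i ∈ subtree (dyadicMid p k) ↔
      1 ≤ i ∧ p * 2 ^ (k + 1) ≤ a (i - 1) ∧ a i < (p + 1) * 2 ^ (k + 1) := by
  rw [subtree_dyadicMid]
  rcases Nat.eq_zero_or_pos i with rfl | hi0
  · simp [pos]
  · rw [pos, if_neg hi0.ne', Pos_mem_Ioo_iff (hmono (Set.mem_Iic.2 (by omega)) (Set.mem_Iic.2 (by omega)) (by omega))]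
    simp [Nat.one_le_iff_ne_zero, hi0.ne']

theorem stmt10_general (d N : ℕ) (a : ℕ → ℕ)
    (hmono : StrictMonoOn a (Set.Iic N))
    (p k x : ℕ) (hxdef : x = p * 2 ^ (k + 1) + 2 ^ k) :
    ∃ lo hi, (⋃ i ∈ {i | i ≤ N ∧ pos a i ∈ subtree x}, seg d N a i) = Set.Ioc lo hi := by
  obtain rfl : x = dyadicMid p k := hxdef
  set I := {i | 1 ≤ i ∧ i ≤ N ∧ p * 2 ^ (k + 1) ≤ a (i - 1) ∧ a i < (p + 1) * 2 ^ (k + 1)}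
  have hpeers : {i | i ≤ N ∧ pos a i ∈ subtree (dyadicMid p k)} = I := by
    ext i
    refine ⟨fun ⟨hi, hmem⟩ => ?_, fun ⟨h1, hi, h2, h3⟩ => ?_⟩
    · obtain ⟨h1, h2, h3⟩ := (pos_mem_subtree_dyadicMid_iff hmono hi p k).1 hmem
      exact ⟨h1, hi, h2, h3⟩
    · exact ⟨hi, (pos_mem_subtree_dyadicMid_iff hmono hi p k).2 ⟨h1, h2, h3⟩⟩
  have hseg : ∀ i ∈ I, seg d N a i = Set.Ioc (a (i - 1)) (a i) := fun i hi => by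
    rw [seg, if_neg (by have := hi.1; omega)]
  rw [hpeers, Set.iUnion₂_congr hseg]
  exact exists_biUnion_Ioc_pred_eq_Ioc hmono.monotoneOn
    (ordConnected_setOf_le_pred_lt hmono.monotoneOn _ _) fun i hi => hi.2.1

/-- Lemma 1: the union of the address space segments of the peers whose
positions lie in the subtree of a fixed address `x = p 1 0^k` is an interval of the
address space. -/
theorem stmt10 (d N : ℕ) (a : ℕ → ℕ) (hN : 1 ≤ N)
    (hmono : StrictMonoOn a (Set.Iic N)) (hlt : a N < 2 ^ d)
    (p k x : ℕ) (hxdef : x = p * 2 ^ (k + 1) + 2 ^ k) (hx : x < 2 ^ d) :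
    ∃ lo hi, (⋃ i ∈ {i | i ≤ N ∧ pos a i ∈ subtree x}, seg d N a i) = Set.Ioc lo hi :=
  stmt10_general d N a hmono p k x hxdef
end
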